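/- arXiv:math/0611878 — 4 statements merged into one kernel-verified Lean document; each statement's English description precedes it below -/
import Mathlib

section
/- Let p ∈ (0,1), let k ≥ 1 be an integer, set a = 1/p, and for j ∈ ℕ set h_j = p^(1/k) · (1−p)^j · (∏_{i=0}^{j−1} (1/k + i)) / j!. Let F and G be cumulative distribution functions on ℝ. Then the following are equivalent: (i) F(x)^k = p·G(x)^k + (1−p)·F(x)^k·G(x)^k for all x ∈ ℝ (the stationarity equation of the generalized max-AR(1) model (4)); (ii) F(x) = G(x) / (a − (a−1)·G(x)^k)^(1/k) for all x ∈ ℝ; (iii) F(x) = ∑_{j=0}^{∞} h_j · G(x)^(1+jk) for all x ∈ ℝ, i.e. F is the Harris(a,k)-maximum of i.i.d. random variables with cdf G. -/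
open Filter

/-- A cumulative distribution function on ℝ: nondecreasing, right-continuous,
with limit 0 at -∞ and limit 1 at +∞. -/
def IsCDF (F : ℝ → ℝ) : Prop :=
  Monotone F ∧ (∀ x : ℝ, ContinuousWithinAt F (Set.Ici x) x) ∧
    Tendsto F atBot (nhds 0) ∧ Tendsto F atTop (nhds 1)

/-- The Harris(a,k) point probabilities `h j` (probability of the point `1 + j*k`). -/
noncomputable def harrisPMF (p : ℝ) (k : ℕ) (j : ℕ) : ℝ :=
  p ^ (1 / (k : ℝ)) * (1 - p) ^ j *
    (∏ i ∈ Finset.range j, (1 / (k : ℝ) + (i : ℝ))) / (Nat.factorial j : ℝ)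

/-!
Solving the stationarity equation for `F ^ k` gives `F ^ k = G ^ k / c` with
`c = a - (a - 1) G ^ k = (1 - (1 - p) G ^ k) / p > 0`, and since `F, G ≥ 0` this is equivalent
to `F = G / c ^ (1 / k)`. Expanding `G / c ^ (1 / k) = p ^ (1 / k) G (1 - (1 - p) G ^ k) ^ (-1 / k)`
by the binomial series, which converges because `0 ≤ (1 - p) G ^ k < 1`, gives exactly the Harris
weights `h j` on the powers `G ^ (1 + j k)`.
-/

open Finset

theorem ascPochhammer_eval_eq_prod_range {R : Type*} [CommSemiring R] (n : ℕ) (r : R) :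
    (ascPochhammer R n).eval r = ∏ i ∈ range n, (r + i) := by
  induction n with
  | zero => simp
  | succ n ih => simp [ascPochhammer_succ_right, ih, prod_range_succ]

theorem Ring.choose_add_natCast_sub_one_eq_prod {K : Type*} [Field K] [CharZero K] (α : K)
    (n : ℕ) :
    Ring.choose (α + n - 1) n = (∏ i ∈ range n, (α + i)) / n.factorial := by
  rw [Ring.choose_eq_smul, Polynomial.descPochhammer_smeval_eq_ascPochhammer,
    Polynomial.ascPochhammer_smeval_eq_eval, ascPochhammer_eval_eq_prod_range, smul_eq_mul,
    inv_mul_eq_div]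
  ring_nf

theorem Real.hasSum_prod_add_div_factorial_mul_pow (α : ℝ) {x : ℝ} (hx : |x| < 1) :
    HasSum (fun n => (∏ i ∈ range n, (α + i)) / n.factorial * x ^ n) (1 / (1 - x) ^ α) := by
  have := (Real.one_div_one_sub_rpow_hasFPowerSeriesOnBall_zero α).hasSum (y := x)
    (by simpa [edist_dist, Real.dist_eq] using hx)
  simpa [FormalMultilinearSeries.ofScalars_apply_eq, Ring.choose_add_natCast_sub_one_eq_prod,
    mul_comm] using this

theorem IsCDF.nonneg {F : ℝ → ℝ} (hF : IsCDF F) (x : ℝ) : 0 ≤ F x :=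
  le_of_tendsto hF.2.2.1 (eventually_atBot.2 ⟨x, fun _ hy => hF.1 hy⟩)

theorem IsCDF.le_one {F : ℝ → ℝ} (hF : IsCDF F) (x : ℝ) : F x ≤ 1 :=
  ge_of_tendsto hF.2.2.2 (eventually_atTop.2 ⟨x, fun _ hy => hF.1 hy⟩)

theorem eq_div_rpow_one_div_iff_pow_eq {f g c : ℝ} {k : ℕ} (hf : 0 ≤ f) (hg : 0 ≤ g)
    (hc : 0 < c) (hk : k ≠ 0) : f = g / c ^ (1 / (k : ℝ)) ↔ f ^ k = g ^ k / c := by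
  have hroot : (g / c ^ (1 / (k : ℝ))) ^ k = g ^ k / c := by
    rw [div_pow, one_div, Real.rpow_inv_natCast_pow hc.le hk]
  rw [← hroot, pow_left_inj₀ hf (by positivity) hk]

section Harris

variable {p g : ℝ} {k : ℕ}

theorem one_div_sub_one_div_sub_one_mul (hp : p ≠ 0) (y : ℝ) :
    1 / p - (1 / p - 1) * y = (1 - (1 - p) * y) / p := by
  field_simp

theorem abs_one_sub_mul_pow_lt_one (hp : p ∈ Set.Ioo (0 : ℝ) 1) (hg₀ : 0 ≤ g)
    (hg₁ : g ≤ 1) : |(1 - p) * g ^ k| < 1 := by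
  have hgk : g ^ k ≤ 1 := pow_le_one₀ hg₀ hg₁
  rw [abs_of_nonneg (mul_nonneg (by linarith [hp.2]) (by positivity))]
  nlinarith [hp.1, hp.2]

theorem stationary_iff_eq_div_rpow (hp : 0 < p) (hk : k ≠ 0) {f : ℝ} (hf : 0 ≤ f)
    (hg : 0 ≤ g) (hgk : |(1 - p) * g ^ k| < 1) :
    f ^ k = p * g ^ k + (1 - p) * f ^ k * g ^ k ↔
      f = g / (1 / p - (1 / p - 1) * g ^ k) ^ (1 / (k : ℝ)) := by
  have hq : 0 < 1 - (1 - p) * g ^ k := by linarith [le_abs_self ((1 - p) * g ^ k)]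
  rw [eq_div_rpow_one_div_iff_pow_eq hf hg ?_ hk, one_div_sub_one_div_sub_one_mul hp.ne',
    div_div_eq_mul_div, eq_div_iff hq.ne']
  · constructor <;> intro h <;> linear_combination h
  · rw [one_div_sub_one_div_sub_one_mul hp.ne']
    positivity

theorem hasSum_harrisPMF_mul_pow (hp : 0 < p) (hgk : |(1 - p) * g ^ k| < 1) :
    HasSum (fun j => harrisPMF p k j * g ^ (1 + j * k))
      (g / (1 / p - (1 / p - 1) * g ^ k) ^ (1 / (k : ℝ))) := by
  have hq : 0 < 1 - (1 - p) * g ^ k := by linarith [le_abs_self ((1 - p) * g ^ k)]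
  have hsum := (Real.hasSum_prod_add_div_factorial_mul_pow (1 / k) hgk).mul_left
    (g * p ^ (1 / (k : ℝ)))
  have hterm : (fun j => harrisPMF p k j * g ^ (1 + j * k)) = fun j =>
      g * p ^ (1 / (k : ℝ)) *
        ((∏ i ∈ range j, (1 / (k : ℝ) + i)) / j.factorial * ((1 - p) * g ^ k) ^ j) := by
    ext j
    rw [harrisPMF, pow_add, mul_comm j k, pow_mul, mul_pow]
    ring
  have hvalue : g / (1 / p - (1 / p - 1) * g ^ k) ^ (1 / (k : ℝ)) =
      g * p ^ (1 / (k : ℝ)) * (1 / (1 - (1 - p) * g ^ k) ^ (1 / (k : ℝ))) := by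
    rw [one_div_sub_one_div_sub_one_mul hp.ne', Real.div_rpow hq.le hp.le]
    field_simp
  rwa [hterm, hvalue]

end Harris

/-- Theorem 3.3: for cdfs `F`, `G`, the stationarity equation of the generalized max-AR(1)
model (4) holds iff `F = P(G)` with `P` the Harris(a,k) PGF, iff `F` is the
Harris(a,k)-maximum of i.i.d. random variables with cdf `G`. -/
theorem stationarity_generalized_max_AR1_iff_harris_maximum
    (p : ℝ) (hp : p ∈ Set.Ioo (0 : ℝ) 1) (k : ℕ) (hk : 1 ≤ k) (a : ℝ) (ha : a = 1 / p)
    (F G : ℝ → ℝ) (hF : IsCDF F) (hG : IsCDF G) :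
    ((∀ x : ℝ, F x ^ k = p * G x ^ k + (1 - p) * F x ^ k * G x ^ k)
        ↔ (∀ x : ℝ, F x = G x / (a - (a - 1) * G x ^ k) ^ ((1 : ℝ) / (k : ℝ)))) ∧
    ((∀ x : ℝ, F x = G x / (a - (a - 1) * G x ^ k) ^ ((1 : ℝ) / (k : ℝ)))
        ↔ (∀ x : ℝ, HasSum (fun j : ℕ => harrisPMF p k j * G x ^ (1 + j * k)) (F x))) := by
  subst ha
  have hGk (x : ℝ) : |(1 - p) * G x ^ k| < 1 :=
    abs_one_sub_mul_pow_lt_one hp (hG.nonneg x) (hG.le_one x)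
  refine ⟨forall_congr' fun x => ?_, forall_congr' fun x => ?_⟩
  · exact stationary_iff_eq_div_rpow hp.1 (by omega) (hF.nonneg x) (hG.nonneg x) (hGk x)
  · have hsum := hasSum_harrisPMF_mul_pow hp.1 (hGk x)
    exact ⟨fun h => h ▸ hsum, fun h => h.unique hsum⟩
end

section
/- Let μ be a probability measure on [0,∞) with Laplace transform φ(s) = ∫ e^{−sx} dμ(x), and let j ≥ 0 and k ≥ 1 be integers and θ > 0. Then s ↦ s^j · φ((1 − s^k)/θ) is a probability generating function: there exists a sequence (q_n)_{n∈ℕ} with q_n ≥ 0 for all n and ∑_{n=0}^{∞} q_n = 1, such that ∑_{n=0}^{∞} q_n · s^n = s^j · φ((1 − s^k)/θ) for every s ∈ [0,1]. -/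
/-!
Conditionally on `x ∼ μ`, let `N` be Poisson with mean `x / θ`; its generating function is
`t ↦ exp (-(1 - t) x / θ)`, so averaging over `μ` (dominated convergence, the weights being
bounded by `1` on `[0, 1]`) shows that `t ↦ φ ((1 - t) / θ)` is the generating function of
the mixed Poisson law of `N`. Substituting `t = s ^ k` and multiplying by `s ^ j` gives the
generating function of `j + k N`.
-/

open MeasureTheory Real

noncomputable def poissonWeight (r : ℝ) (m : ℕ) : ℝ := exp (-r) * r ^ m / m.factorial

lemma poissonWeight_nonneg {r : ℝ} (hr : 0 ≤ r) (m : ℕ) : 0 ≤ poissonWeight r m := by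
  unfold poissonWeight; positivity

lemma continuous_poissonWeight (m : ℕ) : Continuous fun r => poissonWeight r m := by
  unfold poissonWeight; fun_prop

lemma hasSum_poissonWeight_mul_pow (r t : ℝ) :
    HasSum (fun m => poissonWeight r m * t ^ m) (exp (-(1 - t) * r)) := by
  have hexp : HasSum (fun m : ℕ => (t * r) ^ m / m.factorial) (exp (t * r)) := by
    rw [exp_eq_exp_ℝ]
    exact NormedSpace.expSeries_div_hasSum_exp (t * r)
  have hsplit : exp (-(1 - t) * r) = exp (-r) * exp (t * r) := by
    rw [← exp_add]
    ring_nf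
  rw [hsplit]
  refine (hexp.mul_left (exp (-r))).congr_fun fun m => ?_
  simp only [poissonWeight, mul_pow]
  ring

lemma hasSum_poissonWeight (r : ℝ) : HasSum (poissonWeight r) 1 := by
  simpa using hasSum_poissonWeight_mul_pow r 1

section MixedPoisson

variable {α : Type*} [MeasurableSpace α] {μ : Measure α} {f : α → ℝ}

lemma hasSum_integral_poissonWeight_mul_pow [IsFiniteMeasure μ] (hf : Measurable f)
    (hf0 : ∀ᵐ x ∂μ, 0 ≤ f x) {t : ℝ} (ht0 : 0 ≤ t) (ht1 : t ≤ 1) :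
    HasSum (fun m => (∫ x, poissonWeight (f x) m ∂μ) * t ^ m)
      (∫ x, exp (-(1 - t) * f x) ∂μ) := by
  simp_rw [← integral_mul_const]
  refine hasSum_integral_of_dominated_convergence (fun m x => poissonWeight (f x) m)
    (fun m => ?_) (fun m => ?_) (.of_forall fun x => (hasSum_poissonWeight (f x)).summable)
    ?_ (.of_forall fun x => hasSum_poissonWeight_mul_pow (f x) t)
  · exact ((continuous_poissonWeight m).measurable.comp hf).aestronglyMeasurable.mul_const _
  · filter_upwards [hf0] with x hx
    rw [norm_mul, Real.norm_of_nonneg (poissonWeight_nonneg hx m),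
      Real.norm_of_nonneg (pow_nonneg ht0 m)]
    exact mul_le_of_le_one_right (poissonWeight_nonneg hx m) (pow_le_one₀ ht0 ht1)
  · simp only [(hasSum_poissonWeight _).tsum_eq]
    exact integrable_const 1

lemma integral_poissonWeight_nonneg (hf0 : ∀ᵐ x ∂μ, 0 ≤ f x) (m : ℕ) :
    0 ≤ ∫ x, poissonWeight (f x) m ∂μ :=
  integral_nonneg_of_ae <| hf0.mono fun _ hx => poissonWeight_nonneg hx m

end MixedPoisson

/-- The coefficients of `s ^ j * ∑ c m (s ^ k) ^ m`. -/
noncomputable def spread (j k : ℕ) (c : ℕ → ℝ) : ℕ → ℝ := Function.extend (fun m => j + k * m) c 0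

section Spread

variable {j k : ℕ} {c : ℕ → ℝ}

lemma injective_add_mul (hk : k ≠ 0) : Function.Injective fun m : ℕ => j + k * m :=
  fun _ _ h => Nat.eq_of_mul_eq_mul_left (Nat.pos_of_ne_zero hk) (Nat.add_left_cancel h)

lemma spread_nonneg (hc : ∀ m, 0 ≤ c m) (n : ℕ) : 0 ≤ spread j k c n := by
  unfold spread Function.extend
  split_ifs
  · exact hc _
  · exact le_rfl

lemma spread_add_mul (hk : k ≠ 0) (m : ℕ) : spread j k c (j + k * m) = c m :=
  (injective_add_mul hk).extend_apply c 0 m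

lemma spread_eq_zero {n : ℕ} (hn : n ∉ Set.range fun m => j + k * m) : spread j k c n = 0 :=
  Function.extend_apply' _ _ _ hn

lemma hasSum_spread (hk : k ≠ 0) {a : ℝ} (hc : HasSum c a) : HasSum (spread j k c) a :=
  (hasSum_extend_zero (injective_add_mul hk)).2 hc

lemma hasSum_spread_mul_pow (hk : k ≠ 0) {a s : ℝ}
    (hc : HasSum (fun m => c m * (s ^ k) ^ m) a) :
    HasSum (fun n => spread j k c n * s ^ n) (s ^ j * a) := by
  rw [← (injective_add_mul hk).hasSum_iff fun n hn => by rw [spread_eq_zero hn, zero_mul]]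
  refine (hc.mul_left (s ^ j)).congr_fun fun m => ?_
  simp only [Function.comp_apply, spread_add_mul hk, pow_add, pow_mul]
  ring

end Spread

/-- Lemma 4.1: for any Laplace transform `φ` of a probability measure `μ` on `[0,∞)`,
integers `j ≥ 0`, `k ≥ 1` and `θ > 0`, the function `s ↦ s^j · φ((1 - s^k)/θ)` is a
probability generating function. -/
theorem pgf_class_of_laplace_transform (μ : Measure ℝ) [IsProbabilityMeasure μ]
    (hconc : μ (Set.Iio 0) = 0)
    (φ : ℝ → ℝ) (hφ : ∀ s : ℝ, φ s = ∫ x, Real.exp (-s * x) ∂μ)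
    (j k : ℕ) (hk : 1 ≤ k) (θ : ℝ) (hθ : 0 < θ) :
    ∃ q : ℕ → ℝ, (∀ n, 0 ≤ q n) ∧ HasSum q 1 ∧
      ∀ s ∈ Set.Icc (0 : ℝ) 1,
        HasSum (fun n : ℕ => q n * s ^ n) (s ^ j * φ ((1 - s ^ k) / θ)) := by
  have hμ : ∀ᵐ x ∂μ, 0 ≤ x / θ := by
    have hnonneg : ∀ᵐ x ∂μ, 0 ≤ x :=
      measure_mono_null (fun x hx => show x < 0 from not_le.mp hx) hconc
    exact hnonneg.mono fun x hx => div_nonneg hx hθ.le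
  have hk0 : k ≠ 0 := by omega
  have hgen : ∀ t, 0 ≤ t → t ≤ 1 →
      HasSum (fun m => (∫ x, poissonWeight (x / θ) m ∂μ) * t ^ m) (φ ((1 - t) / θ)) := by
    intro t ht0 ht1
    convert hasSum_integral_poissonWeight_mul_pow
      (by fun_prop : Measurable fun x : ℝ => x / θ) hμ ht0 ht1 using 1
    rw [hφ]
    congr with x
    ring_nf
  refine ⟨spread j k _, spread_nonneg (integral_poissonWeight_nonneg hμ), ?_, ?_⟩
  · have hφ0 : φ 0 = 1 := by simp [hφ]
    simpa [hφ0] using hasSum_spread hk0 (hgen 1 zero_le_one le_rfl)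
  · rintro s ⟨hs0, hs1⟩
    exact hasSum_spread_mul_pow hk0 (hgen _ (pow_nonneg hs0 k) (pow_le_one₀ hs0 hs1))
end

section
/- Let μ be a probability measure on [0,∞) with Laplace transform φ(s) = ∫ e^{−sx} dμ(x), and let j ≥ 0 and k ≥ 1 be integers. For θ > 0 let N_θ be the nonnegative-integer-valued random variable whose probability generating function is P_θ(s) = s^j · φ((1 − s^k)/θ). Then θ·N_θ converges in distribution, as θ ↓ 0, to k·U, where U is a random variable with law μ; equivalently, for every t ≥ 0, lim_{θ→0+} e^{−jθt} · φ((1 − e^{−kθt})/θ) = φ(k·t). -/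
open MeasureTheory Filter

/-- Lemma 4.2: if `N_θ` has PGF `P_θ(s) = s^j φ((1-s^k)/θ)` with `φ` the Laplace transform of
a probability measure `μ` on `[0,∞)`, then `θ·N_θ → k·U` in distribution as `θ ↓ 0`, where `U`
has law `μ`; equivalently, the Laplace transform of `θ·N_θ`, namely
`t ↦ P_θ(e^{-θt}) = e^{-jθt} φ((1 - e^{-kθt})/θ)`, converges pointwise on `[0,∞)` to `φ(kt)`,
the Laplace transform of `k·U`. -/
theorem theta_N_theta_tendsto_kU (μ : Measure ℝ) [IsProbabilityMeasure μ]
    (hconc : μ (Set.Iio 0) = 0)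
    (φ : ℝ → ℝ) (hφ : ∀ s : ℝ, φ s = ∫ x, Real.exp (-s * x) ∂μ)
    (j k : ℕ) (hk : 1 ≤ k) :
    ∀ t : ℝ, 0 ≤ t →
      Tendsto (fun θ : ℝ =>
          Real.exp (-(j : ℝ) * θ * t) * φ ((1 - Real.exp (-(k : ℝ) * θ * t)) / θ))
        (nhdsWithin 0 (Set.Ioi 0)) (nhds (φ ((k : ℝ) * t))) := by
  intro t ht
  have hae : ∀ᵐ x ∂μ, 0 ≤ x := by
    rw [ae_iff]
    convert hconc using 2
    ext x
    simp [not_le]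
  -- continuity of φ at k*t from within [0,∞)
  have hcont : Tendsto φ (nhdsWithin ((k : ℝ) * t) (Set.Ici 0))
      (nhds (φ ((k : ℝ) * t))) := by
    have : Tendsto (fun s : ℝ => ∫ x, Real.exp (-s * x) ∂μ)
        (nhdsWithin ((k : ℝ) * t) (Set.Ici 0)) (nhds (φ ((k : ℝ) * t))) := by
      rw [hφ]
      apply tendsto_integral_filter_of_dominated_convergence (fun _ => (1 : ℝ))
      · exact Eventually.of_forall fun s =>
          (Real.continuous_exp.comp (continuous_const.mul continuous_id)).aestronglyMeasurable
      · filter_upwards [self_mem_nhdsWithin] with s hs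
        filter_upwards [hae] with x hx
        have : -s * x ≤ 0 := by
          have : 0 ≤ s * x := mul_nonneg hs hx
          linarith
        have := Real.exp_le_one_iff.mpr this
        rw [Real.norm_eq_abs, abs_of_pos (Real.exp_pos _)]
        exact this
      · exact integrable_const 1
      · filter_upwards [hae] with x _
        exact ((Real.continuous_exp.comp
          ((continuous_neg.comp continuous_id).mul continuous_const)).tendsto
          ((k : ℝ) * t)).mono_left nhdsWithin_le_nhds
    exact this.congr fun s => (hφ s).symm
  -- the inner argument tends to k*t within [0,∞)
  have hderiv : HasDerivAt (fun θ : ℝ => 1 - Real.exp (-((k : ℝ) * t) * θ))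
      ((k : ℝ) * t) 0 := by
    have h1 : HasDerivAt (fun θ : ℝ => -((k : ℝ) * t) * θ) (-((k : ℝ) * t)) 0 := by
      simpa using (hasDerivAt_id (0 : ℝ)).const_mul (-((k : ℝ) * t))
    have h2 := (h1.exp).const_sub 1
    simpa using h2
  have hslope : Tendsto (fun θ : ℝ => (1 - Real.exp (-(k : ℝ) * θ * t)) / θ)
      (nhdsWithin 0 (Set.Ioi 0)) (nhds ((k : ℝ) * t)) := by
    have h := hasDerivAt_iff_tendsto_slope.mp hderiv
    have h' := h.mono_left (nhdsWithin_mono 0 (fun x hx => ne_of_gt hx : Set.Ioi (0:ℝ) ⊆ {0}ᶜ))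
    apply h'.congr'
    filter_upwards [self_mem_nhdsWithin] with θ (hθ : 0 < θ)
    have : -((k : ℝ) * t) * θ = -(k : ℝ) * θ * t := by ring
    simp [slope_def_field, this]
    ring_nf
  have harg : Tendsto (fun θ : ℝ => (1 - Real.exp (-(k : ℝ) * θ * t)) / θ)
      (nhdsWithin 0 (Set.Ioi 0)) (nhdsWithin ((k : ℝ) * t) (Set.Ici 0)) := by
    rw [tendsto_nhdsWithin_iff]
    refine ⟨hslope, ?_⟩
    filter_upwards [self_mem_nhdsWithin] with θ (hθ : 0 < θ)
    have hle : Real.exp (-(k : ℝ) * θ * t) ≤ 1 := by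
      apply Real.exp_le_one_iff.mpr
      have : 0 ≤ (k : ℝ) * θ * t := by positivity
      linarith
    exact div_nonneg (by linarith) hθ.le
  have hexp : Tendsto (fun θ : ℝ => Real.exp (-(j : ℝ) * θ * t))
      (nhdsWithin 0 (Set.Ioi 0)) (nhds 1) := by
    have hc : Continuous fun θ : ℝ => Real.exp (-(j : ℝ) * θ * t) := by continuity
    have h0 := hc.tendsto 0
    simp only [mul_zero, zero_mul, Real.exp_zero] at h0
    exact h0.mono_left nhdsWithin_le_nhds
  have := hexp.mul (hcont.comp harg)
  simpa using this
end

section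
/- Let k ≥ 1 be an integer and let H be a cumulative distribution function on ℝ. Define F : ℝ → ℝ by F(x) = 1 / (1 + k·(−log H(x)))^(1/k) when H(x) > 0 and F(x) = 0 when H(x) = 0. Then F is a cumulative distribution function, and for every p ∈ (0,1), setting a = 1/p, there exists a cumulative distribution function G on ℝ such that F(x) = G(x) / (a − (a−1)·G(x)^k)^(1/k) for all x ∈ ℝ; that is, every gamma-max-infinitely-divisible distribution function is a Harris(a,k)-maximum for every p ∈ (0,1). -/
/-!
`F = φₖ ∘ H` with `φₖ(h) = (1 + k(-log h))^(-1/k)` (`gammaTransform k`), which is continuous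
and nondecreasing on `[0, 1]` with `φₖ 0 = 0` and `φₖ 1 = 1`; hence `F` is a cdf. The Harris
factor is `G = φₖ ∘ H^p`: with `L = -log H`, one has `G^k = 1/(1 + kpL)` and
`1/p - (1/p - 1) G^k = (1 + kL)/(1 + kpL)`, so dividing `G` by the `k`-th root of the latter
leaves exactly `(1 + kL)^(-1/k) = F`.
-/

open Filter

open Set Real

theorem IsCDF.mem_Icc {H : ℝ → ℝ} (hH : IsCDF H) (x : ℝ) : H x ∈ Icc 0 1 :=
  ⟨le_of_tendsto hH.2.2.1 (eventually_atBot.2 ⟨x, fun _ hy => hH.1 hy⟩),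
    ge_of_tendsto hH.2.2.2 (eventually_atTop.2 ⟨x, fun _ hy => hH.1 hy⟩)⟩

theorem IsCDF.comp {H φ : ℝ → ℝ} (hH : IsCDF H) (hmono : MonotoneOn φ (Icc 0 1))
    (hcont : ContinuousOn φ (Icc 0 1)) (h0 : φ 0 = 0) (h1 : φ 1 = 1) : IsCDF (φ ∘ H) := by
  have hmaps := hH.mem_Icc
  have hlim : ∀ {l : Filter ℝ} {c : ℝ}, c ∈ Icc 0 1 → Tendsto H l (nhds c) →
      Tendsto (φ ∘ H) l (nhds (φ c)) := fun hc hl =>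
    (hcont _ hc).tendsto.comp (tendsto_nhdsWithin_iff.2 ⟨hl, Eventually.of_forall hmaps⟩)
  refine ⟨fun x y hxy => hmono (hmaps x) (hmaps y) (hH.1 hxy),
    fun x => (hcont _ (hmaps x)).comp (hH.2.1 x) fun y _ => hmaps y, ?_, ?_⟩
  · simpa [h0] using hlim ⟨le_rfl, zero_le_one⟩ hH.2.2.1
  · simpa [h1] using hlim ⟨zero_le_one, le_rfl⟩ hH.2.2.2

theorem IsCDF.rpow {H : ℝ → ℝ} (hH : IsCDF H) {p : ℝ} (hp : 0 < p) :
    IsCDF fun x => H x ^ p :=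
  hH.comp (fun _ ha _ _ hab => rpow_le_rpow ha.1 hab hp.le)
    (continuous_rpow_const hp.le).continuousOn (zero_rpow hp.ne') (one_rpow p)

noncomputable def gammaTransform (k h : ℝ) : ℝ :=
  if 0 < h then 1 / (1 + k * -log h) ^ (1 / k) else 0

section gammaTransform

variable {k h : ℝ}

theorem gammaTransform_of_pos (hh : 0 < h) :
    gammaTransform k h = 1 / (1 + k * -log h) ^ (1 / k) :=
  if_pos hh

theorem gammaTransform_of_nonpos (hh : h ≤ 0) : gammaTransform k h = 0 :=
  if_neg hh.not_gt

theorem gammaTransform_one : gammaTransform k 1 = 1 := by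
  simp [gammaTransform_of_pos one_pos]

theorem one_le_one_add_mul_neg_log (hk : 0 ≤ k) (h0 : 0 < h) (h1 : h ≤ 1) :
    1 ≤ 1 + k * -log h :=
  le_add_of_nonneg_right (mul_nonneg hk (neg_nonneg.2 (log_nonpos h0.le h1)))

theorem gammaTransform_nonneg (hk : 0 ≤ k) (h1 : h ≤ 1) : 0 ≤ gammaTransform k h := by
  rcases le_or_gt h 0 with h0 | h0
  · exact (gammaTransform_of_nonpos h0).ge
  · rw [gammaTransform_of_pos h0]
    have hbase := one_le_one_add_mul_neg_log hk h0 h1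
    exact one_div_nonneg.2 (rpow_nonneg (by linarith) _)

theorem monotoneOn_gammaTransform (hk : 0 ≤ k) : MonotoneOn (gammaTransform k) (Icc 0 1) := by
  intro a ⟨_, ha1⟩ b ⟨_, hb1⟩ hab
  rcases le_or_gt a 0 with ha0 | ha0
  · exact (gammaTransform_of_nonpos ha0).trans_le (gammaTransform_nonneg hk hb1)
  have hb0 := ha0.trans_le hab
  rw [gammaTransform_of_pos ha0, gammaTransform_of_pos hb0]
  have hbase := one_le_one_add_mul_neg_log hk hb0 hb1
  have hlog : k * -log b ≤ k * -log a :=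
    mul_le_mul_of_nonneg_left (neg_le_neg (log_le_log ha0 hab)) hk
  exact one_div_le_one_div_of_le (rpow_pos_of_pos (by linarith) _)
    (rpow_le_rpow (by linarith) (by linarith) (by positivity))

theorem tendsto_gammaTransform_nhdsGT_zero (hk : 0 < k) :
    Tendsto (gammaTransform k) (nhdsWithin 0 (Ioi 0)) (nhds 0) := by
  have hbase : Tendsto (fun t => 1 + k * -log t) (nhdsWithin 0 (Ioi 0)) atTop :=
    tendsto_atTop_add_const_left _ 1
      ((tendsto_neg_atBot_atTop.comp tendsto_log_nhdsGT_zero).const_mul_atTop hk)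
  have hroot := (tendsto_rpow_atTop (one_div_pos.2 hk)).comp hbase
  refine ((tendsto_const_nhds (x := (1 : ℝ))).div_atTop hroot).congr' ?_
  filter_upwards [self_mem_nhdsWithin] with t ht
  exact (gammaTransform_of_pos ht).symm

theorem continuousOn_gammaTransform (hk : 0 < k) : ContinuousOn (gammaTransform k) (Icc 0 1) := by
  rintro h ⟨h0, h1⟩
  rcases h0.eq_or_lt with rfl | h0
  · refine ContinuousWithinAt.mono ?_ Icc_subset_Ici_self
    rw [← Ioi_insert, continuousWithinAt_insert_self, ContinuousWithinAt,
      gammaTransform_of_nonpos le_rfl]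
    exact tendsto_gammaTransform_nhdsGT_zero hk
  have hbase := one_le_one_add_mul_neg_log hk.le h0 h1
  have hcont : ContinuousAt (fun t => 1 / (1 + k * -log t) ^ (1 / k)) h :=
    continuousAt_const.div
      ((continuousAt_const.add (continuousAt_const.mul (continuousAt_log h0.ne').neg)).rpow_const
        (Or.inr (one_div_pos.2 hk).le))
      (rpow_pos_of_pos (by linarith) _).ne'
  refine (hcont.congr ?_).continuousWithinAt
  filter_upwards [isOpen_Ioi.mem_nhds h0] with t ht
  exact (gammaTransform_of_pos ht).symm

theorem IsCDF.comp_gammaTransform {H : ℝ → ℝ} (hH : IsCDF H) (hk : 0 < k) :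
    IsCDF (gammaTransform k ∘ H) :=
  hH.comp (monotoneOn_gammaTransform hk.le) (continuousOn_gammaTransform hk)
    (gammaTransform_of_nonpos le_rfl) gammaTransform_one

end gammaTransform

theorem gammaTransform_eq_div_harris {k : ℕ} (hk : k ≠ 0) {p h : ℝ} (hp : 0 < p)
    (h0 : 0 ≤ h) (h1 : h ≤ 1) :
    gammaTransform k h = gammaTransform k (h ^ p) /
      (1 / p - (1 / p - 1) * gammaTransform k (h ^ p) ^ k) ^ ((1 : ℝ) / k) := by
  rcases h0.eq_or_lt with rfl | h0
  · simp [gammaTransform_of_nonpos, zero_rpow hp.ne']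
  set L := -log h
  have hL : 0 ≤ L := neg_nonneg.2 (log_nonpos h0.le h1)
  set A := 1 + k * L
  set B := 1 + k * (p * L)
  have hA : 0 < A := by positivity
  have hB : 0 < B := by positivity
  have hG : gammaTransform k (h ^ p) = 1 / B ^ ((1 : ℝ) / k) := by
    rw [gammaTransform_of_pos (rpow_pos_of_pos h0 p), log_rpow h0]
    congr 3
    ring
  have hGk : gammaTransform k (h ^ p) ^ k = 1 / B := by
    rw [hG, div_pow, one_pow, one_div (k : ℝ), rpow_inv_natCast_pow hB.le hk]
  have hHarris : 1 / p - (1 / p - 1) * (1 / B) = A / B := by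
    field_simp
    ring
  rw [gammaTransform_of_pos h0, hGk, hHarris, hG, div_rpow hA.le hB.le,
    div_div_div_cancel_right₀ (rpow_pos_of_pos hB _).ne']

/-- Remark 4.1: every gamma-max-infinitely-divisible distribution function
`F = 1/(1 + k(-log H))^(1/k)`, `H` a cdf, is itself a cdf and is a Harris(1/p, k)-maximum
for every `p ∈ (0,1)`. -/
theorem gamma_max_ID_is_harris_maximum (k : ℕ) (hk : 1 ≤ k)
    (H : ℝ → ℝ) (hH : IsCDF H) (F : ℝ → ℝ)
    (hF : ∀ x : ℝ,
      (0 < H x → F x = 1 / (1 + (k : ℝ) * (-Real.log (H x))) ^ ((1 : ℝ) / (k : ℝ))) ∧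
      (H x = 0 → F x = 0)) :
    IsCDF F ∧
    ∀ p ∈ Set.Ioo (0 : ℝ) 1, ∃ G : ℝ → ℝ, IsCDF G ∧
      ∀ x : ℝ, F x = G x / ((1 / p) - ((1 / p) - 1) * G x ^ k) ^ ((1 : ℝ) / (k : ℝ)) := by
  have hk' : (0 : ℝ) < k := by exact_mod_cast hk
  have hFH : F = gammaTransform k ∘ H := by
    funext x
    rcases (hH.mem_Icc x).1.eq_or_lt with hx | hx
    · rw [(hF x).2 hx.symm, Function.comp_apply, gammaTransform_of_nonpos hx.ge]
    · rw [(hF x).1 hx, Function.comp_apply, gammaTransform_of_pos hx]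
  subst hFH
  refine ⟨hH.comp_gammaTransform hk', fun p hp => ?_⟩
  refine ⟨gammaTransform k ∘ fun x => H x ^ p, (hH.rpow hp.1).comp_gammaTransform hk', fun x => ?_⟩
  exact gammaTransform_eq_div_harris (by omega) hp.1 (hH.mem_Icc x).1 (hH.mem_Icc x).2
end
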